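/- For every integer p ≥ 1, one has (2p+3)·M_{p+1}(π) > M_p(π). -/

import Mathlib

open Real

/-- `M_p(θ) = (2-2cos θ)^{p+1} · ∑_{j∈ℤ} (θ+2πj)^{-(2p+2)}`. -/
noncomputable def Mp (p : ℕ) (θ : ℝ) : ℝ :=
  (2 - 2 * Real.cos θ) ^ (p + 1) *
    ∑' j : ℤ, ((θ + 2 * Real.pi * (j : ℝ)) ^ (2 * p + 2))⁻¹

/-- Majorant sequence over `ℕ`. -/
noncomputable def uu : ℕ → ℝ := fun n => 1 / ((n : ℝ) + 1) ^ 2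

lemma hasSum_uu : HasSum uu (π ^ 2 / 6) := by
  have h := hasSum_zeta_two
  have h2 := (hasSum_nat_add_iff' (f := fun n : ℕ => (1 : ℝ) / (n : ℝ) ^ 2) 1).2 h
  simp only [Finset.range_one, Finset.sum_singleton, Nat.cast_zero] at h2
  norm_num at h2
  convert h2 using 2 with n
  · rfl
  simp only [uu, one_div]

/-- Majorant over `ℤ`. -/
noncomputable def G : ℤ → ℝ := fun j => Int.rec uu uu j

lemma hasSum_G : HasSum G (π ^ 2 / 3) := by
  have h := hasSum_uu.int_rec hasSum_uu
  convert h using 1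
  · rfl
  ring

lemma G_nonneg (j : ℤ) : 0 ≤ G j := by
  cases j with
  | ofNat n => simp only [G, uu]; positivity
  | negSucc n => simp only [G, uu]; positivity

lemma ptbound (k : ℕ) (hk : 1 ≤ k) (j : ℤ) :
    ((π + 2 * π * (j : ℝ)) ^ (2 * k))⁻¹ ≤ (π ^ (2 * k))⁻¹ * G j := by
  have hk2 : 2 ≤ 2 * k := by omega
  cases j with
  | ofNat n =>
      have hcast : ((Int.ofNat n : ℤ) : ℝ) = (n : ℝ) := by simp
      rw [hcast, show π + 2 * π * (n : ℝ) = π * (2 * (n : ℝ) + 1) by ring]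
      have h1 : ((n : ℝ) + 1) ^ 2 ≤ (2 * (n : ℝ) + 1) ^ (2 * k) := by
        calc ((n : ℝ) + 1) ^ 2 ≤ (2 * (n : ℝ) + 1) ^ 2 := by
              apply pow_le_pow_left₀ (by positivity)
              · linarith [Nat.cast_nonneg (α := ℝ) n]
          _ ≤ (2 * (n : ℝ) + 1) ^ (2 * k) := by
              apply pow_le_pow_right₀ (by linarith [Nat.cast_nonneg (α := ℝ) n]) hk2
      show _ ≤ (π ^ (2 * k))⁻¹ * uu n
      rw [mul_pow, mul_inv, uu, one_div]
      gcongr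
  | negSucc n =>
      have hcast : ((Int.negSucc n : ℤ) : ℝ) = -((n : ℝ) + 1) := by
        simp [Int.cast_negSucc]
      rw [hcast, show π + 2 * π * (-((n : ℝ) + 1)) = -(π * (2 * (n : ℝ) + 1)) by ring,
        Even.neg_pow (even_two_mul k)]
      have h1 : ((n : ℝ) + 1) ^ 2 ≤ (2 * (n : ℝ) + 1) ^ (2 * k) := by
        calc ((n : ℝ) + 1) ^ 2 ≤ (2 * (n : ℝ) + 1) ^ 2 := by
              apply pow_le_pow_left₀ (by positivity)
              · linarith [Nat.cast_nonneg (α := ℝ) n]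
          _ ≤ (2 * (n : ℝ) + 1) ^ (2 * k) := by
              apply pow_le_pow_right₀ (by linarith [Nat.cast_nonneg (α := ℝ) n]) hk2
      show _ ≤ (π ^ (2 * k))⁻¹ * uu n
      rw [mul_pow, mul_inv, uu, one_div]
      gcongr

lemma term_nonneg (k : ℕ) (j : ℤ) : 0 ≤ ((π + 2 * π * (j : ℝ)) ^ (2 * k))⁻¹ := by
  rw [pow_mul]
  positivity

lemma summ (k : ℕ) (hk : 1 ≤ k) :
    Summable (fun j : ℤ => ((π + 2 * π * (j : ℝ)) ^ (2 * k))⁻¹) := by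
  apply Summable.of_norm_bounded (g := fun j => (π ^ (2 * k))⁻¹ * G j)
    (hasSum_G.summable.mul_left _)
  intro j
  rw [Real.norm_eq_abs, abs_of_nonneg (term_nonneg k j)]
  exact ptbound k hk j

lemma upper (k : ℕ) (hk : 1 ≤ k) :
    ∑' j : ℤ, ((π + 2 * π * (j : ℝ)) ^ (2 * k))⁻¹ ≤ (π ^ (2 * k))⁻¹ * (π ^ 2 / 3) := by
  calc ∑' j : ℤ, ((π + 2 * π * (j : ℝ)) ^ (2 * k))⁻¹
      ≤ ∑' j : ℤ, (π ^ (2 * k))⁻¹ * G j :=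
        Summable.tsum_le_tsum (ptbound k hk) (summ k hk) (hasSum_G.summable.mul_left _)
    _ = (π ^ (2 * k))⁻¹ * (π ^ 2 / 3) := by
        rw [tsum_mul_left, hasSum_G.tsum_eq]

lemma lower (k : ℕ) (hk : 1 ≤ k) :
    2 * (π ^ (2 * k))⁻¹ ≤ ∑' j : ℤ, ((π + 2 * π * (j : ℝ)) ^ (2 * k))⁻¹ := by
  have h := Summable.sum_le_tsum ({0, -1} : Finset ℤ) (fun i _ => term_nonneg k i) (summ k hk)
  rw [Finset.sum_pair (by norm_num : (0 : ℤ) ≠ -1)] at h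
  have e0 : ((π + 2 * π * ((0 : ℤ) : ℝ)) ^ (2 * k))⁻¹ = (π ^ (2 * k))⁻¹ := by norm_num
  have e1 : ((π + 2 * π * ((-1 : ℤ) : ℝ)) ^ (2 * k))⁻¹ = (π ^ (2 * k))⁻¹ := by
    rw [show π + 2 * π * ((-1 : ℤ) : ℝ) = -π by push_cast; ring,
      Even.neg_pow (even_two_mul k)]
  rw [e0, e1] at h
  linarith

/-- For every integer `p ≥ 1`, `(2p+3)·M_{p+1}(π) > M_p(π)`. -/
theorem Ep_pos (p : ℕ) (hp : 1 ≤ p) :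
    Mp p Real.pi < (2 * p + 3 : ℝ) * Mp (p + 1) Real.pi := by
  unfold Mp
  rw [Real.cos_pi]
  norm_num only
  rw [show 2 * p + 2 = 2 * (p + 1) by ring, show 2 * (p + 1) + 2 = 2 * (p + 2) by ring]
  have hπ := Real.pi_pos
  have hπ10 : π ^ 2 < 10 := by nlinarith [Real.pi_lt_d2]
  have hc : (5 : ℝ) ≤ 2 * (p : ℝ) + 3 := by
    have : (1 : ℝ) ≤ (p : ℝ) := by exact_mod_cast hp
    linarith
  have hA : (0 : ℝ) < π ^ (2 * (p + 1)) := by positivity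
  have hB : (0 : ℝ) < (4 : ℝ) ^ (p + 1) := by positivity
  set A := π ^ (2 * (p + 1)) with hAdef
  set B := (4 : ℝ) ^ (p + 1) with hBdef
  have hA2 : π ^ (2 * (p + 2)) = A * π ^ 2 := by
    rw [hAdef, ← pow_add]
    ring_nf
  have hB2 : ((4 : ℝ)) ^ (p + 1 + 1) = B * 4 := by
    rw [hBdef, pow_succ]
  rw [hB2]
  set y := (π ^ 2)⁻¹ with hydef
  have hy : π ^ 2 * y = 1 := by
    rw [hydef]; field_simp
  have hypos : 0 < y := by positivity
  calc B * ∑' j : ℤ, ((π + 2 * π * (j : ℝ)) ^ (2 * (p + 1)))⁻¹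
      ≤ B * (A⁻¹ * (π ^ 2 / 3)) := by
        apply mul_le_mul_of_nonneg_left (upper (p + 1) (by omega)) (le_of_lt hB)
    _ < (2 * (p : ℝ) + 3) * (B * 4 * (2 * (A⁻¹ * y))) := by
        have key : π ^ 2 / 3 < (2 * (p : ℝ) + 3) * (8 * y) := by
          have hπ2 : (0:ℝ) < π ^ 2 := by positivity
          nlinarith [mul_pos hπ2 hypos, mul_pos hypos hypos, hy, hπ10, hc, hypos]
        calc B * (A⁻¹ * (π ^ 2 / 3)) = (B * A⁻¹) * (π ^ 2 / 3) := by ring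
          _ < (B * A⁻¹) * ((2 * (p : ℝ) + 3) * (8 * y)) := by
              apply mul_lt_mul_of_pos_left key (by positivity)
          _ = (2 * (p : ℝ) + 3) * (B * 4 * (2 * (A⁻¹ * y))) := by ring
    _ ≤ (2 * (p : ℝ) + 3) * (B * 4 * ∑' j : ℤ, ((π + 2 * π * (j : ℝ)) ^ (2 * (p + 2)))⁻¹) := by
        apply mul_le_mul_of_nonneg_left _ (by linarith)
        apply mul_le_mul_of_nonneg_left _ (by positivity)
        have := lower (p + 2) (by omega)
        rw [hA2, mul_inv] at this
        linarith
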